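/- In LR-Subtraction Nim with nonempty S ⊆ ℤ≥2, there is no A such that the outcome sequence for n ≥ A alternates between the values L and P with period 2 (with both values actually occurring). -/
import Mathlib


open scoped Classical

inductive Outcome : Type
  | L | R | N | P
deriving DecidableEq

/-- Outcome determined from the set of outcomes of the options of a non-terminal position. -/
noncomputable def fromOptions (T : Set Outcome) : Outcome :=
  if Outcome.L ∈ T ∧ T ⊆ {Outcome.L, Outcome.N} then Outcome.L
  else if Outcome.R ∈ T ∧ T ⊆ {Outcome.R, Outcome.N} then Outcome.R
  else if T = {Outcome.N} then Outcome.P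
  else Outcome.N

/-- Outcome of Ending Partizan Subtraction Nim with removable set `S ⊆ ℤ≥2` and
terminal assignment `W`. -/
noncomputable def epOutcome (S : Set ℕ) (hS : ∀ s ∈ S, 2 ≤ s) (W : ℕ → Outcome) : ℕ → Outcome :=
  fun n => Nat.strongRecOn n (fun n ih =>
    if ∃ s ∈ S, s ≤ n then
      fromOptions {o | ∃ s, ∃ hs : s ∈ S, ∃ hsn : s ≤ n,
        o = ih (n - s) (by have := hS s hs; omega)}
    else W n)

/-- Outcome of `LR`-Subtraction Nim: at a terminal position, Left wins if the number of
remaining tokens is even, Right wins if it is odd. -/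
noncomputable def lrOutcome (S : Set ℕ) (hS : ∀ s ∈ S, 2 ≤ s) : ℕ → Outcome :=
  epOutcome S hS (fun n => if Even n then Outcome.L else Outcome.R)

lemma epOutcome_eq (S : Set ℕ) (hS : ∀ s ∈ S, 2 ≤ s) (W : ℕ → Outcome) (n : ℕ)
    (h : ∃ s ∈ S, s ≤ n) :
    epOutcome S hS W n = fromOptions {o | ∃ s, ∃ hs : s ∈ S, ∃ hsn : s ≤ n,
      o = epOutcome S hS W (n - s)} := by
  conv_lhs => rw [epOutcome, Nat.strongRecOn_eq]
  rw [if_pos h]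
  rfl

lemma fromOptions_eq_P {T : Set Outcome} (h : fromOptions T = Outcome.P) : T = {Outcome.N} := by
  unfold fromOptions at h
  split_ifs at h with h1 h2 h3
  · exact h3

theorem stmt14 (S : Set ℕ) (hS : ∀ s ∈ S, 2 ≤ s) (hne : S.Nonempty) :
    ¬ ∃ A : ℕ,
      (∀ n, A ≤ n → lrOutcome S hS (n + 2) = lrOutcome S hS n) ∧
      (∀ n, A ≤ n →
        lrOutcome S hS n = Outcome.L ∨ lrOutcome S hS n = Outcome.P) ∧
      (∃ n, A ≤ n ∧ lrOutcome S hS n = Outcome.L) ∧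
      (∃ n, A ≤ n ∧ lrOutcome S hS n = Outcome.P) := by
  rintro ⟨A, hper, hLP, -, n0, hn0, hP⟩
  obtain ⟨s0, hs0S⟩ := hne
  have hs02' := hS s0 hs0S
  -- find a large n ≡ n0 mod 2, n ≥ A + s0, with outcome P
  set n : ℕ := n0 + 2 * (A + s0)
  have hPn : lrOutcome S hS n = Outcome.P := by
    have : ∀ k, lrOutcome S hS (n0 + 2 * k) = Outcome.P := by
      intro k
      induction k with
      | zero => simpa using hP
      | succ k ih =>
        have : n0 + 2 * (k + 1) = (n0 + 2 * k) + 2 := by ring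
        rw [this, hper _ (by omega)]
        exact ih
    exact this (A + s0)
  have hrec := epOutcome_eq S hS (fun m => if Even m then Outcome.L else Outcome.R) n
    ⟨s0, hs0S, by omega⟩
  rw [lrOutcome] at hPn
  rw [hrec] at hPn
  have hT := fromOptions_eq_P hPn
  have hmem : lrOutcome S hS (n - s0) ∈ {o | ∃ s, ∃ hs : s ∈ S, ∃ hsn : s ≤ n,
      o = epOutcome S hS (fun m => if Even m then Outcome.L else Outcome.R) (n - s)} :=
    ⟨s0, hs0S, by omega, rfl⟩
  rw [hT] at hmem
  have hN : lrOutcome S hS (n - s0) = Outcome.N := hmem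
  have := hLP (n - s0) (by omega)
  rw [hN] at this
  rcases this with h | h <;> exact Outcome.noConfusion h
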